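/- arXiv:1812.03709 — 4 statements merged into one kernel-verified Lean document; each statement's English description precedes it below -/
import Mathlib

section
/- Define $u2(n)$ by $\sum_{n\geq 0} u2(n) q^n = \sum_{n\geq 1} \frac{(-q^2;q^2)_{n-1}^2\, q^{2n}}{(-q;q^2)_n}\cdot(-1)^n$ evaluated at $q \mapsto -q$ (i.e., $u2(n)$ are the coefficients of $U2(1;-q)$). Then $u2(n+1) \geq u2(n)$ for all $n \geq 0$. -/
/-!
The summands of `(1 - q) U2(1;-q)` are
`(-q²;q²)ₙ² q^(2n+2) / ((1 - q³)(1 - q⁵)⋯(1 - q^(2n+1)))`: products of the polynomials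
`1 + q^(2j+2)`, a monomial and the geometric series `1 / (1 - q^(2j+3))`, so they, and hence their
sum, have nonnegative power series coefficients. Since power series coefficients are determined by
the values on `(0, 1)`, these coefficients are `u2 0` and the differences `u2 (n+1) - u2 n`.
-/

/-- The series `U2(1;-q) = ∑_{n≥1} (-q²;q²)_{n-1}² q^{2n} / (q;q²)_n`. -/
noncomputable def U2series (q : ℝ) : ℝ :=
  ∑' n : ℕ, (∏ j ∈ Finset.range n, (1 + q ^ 2 * (q ^ 2) ^ j)) ^ 2 * q ^ (2 * (n + 1)) /
    ∏ j ∈ Finset.range (n + 1), (1 - q * (q ^ 2) ^ j)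

open Filter Topology Finset

theorem HasSum.mul_pow_antidiagonal {c d : ℕ → ℝ} {q a b : ℝ}
    (ha : HasSum (fun n => c n * q ^ n) a) (hb : HasSum (fun n => d n * q ^ n) b) :
    HasSum (fun n => (∑ kl ∈ antidiagonal n, c kl.1 * d kl.2) * q ^ n) (a * b) := by
  have hc : Summable fun n => ‖c n * q ^ n‖ := summable_abs_iff.2 ha.summable
  have hd : Summable fun n => ‖d n * q ^ n‖ := summable_abs_iff.2 hb.summable
  have hprod := (summable_norm_sum_mul_antidiagonal_of_summable_norm hc hd).of_norm.hasSum
  rw [← tsum_mul_tsum_eq_tsum_sum_antidiagonal_of_summable_norm hc hd, ha.tsum_eq,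
    hb.tsum_eq] at hprod
  refine hprod.congr_fun fun n => ?_
  rw [sum_mul]
  refine sum_congr rfl fun kl hkl => ?_
  rw [← mem_antidiagonal.1 hkl, pow_add]
  ring

theorem HasSum.partialSums_mul_pow {c : ℕ → ℝ} {q a : ℝ} (ha : HasSum (fun n => c n * q ^ n) a)
    (hq : |q| < 1) :
    HasSum (fun n => (∑ k ∈ range (n + 1), c k) * q ^ n) (a * (1 - q)⁻¹) := by
  have hgeom : HasSum (fun n => (fun _ => (1 : ℝ)) n * q ^ n) (1 - q)⁻¹ := by
    simpa using hasSum_geometric_of_abs_lt_one hq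
  simpa [Nat.sum_antidiagonal_eq_sum_range_succ_mk] using ha.mul_pow_antidiagonal hgeom

theorem eq_zero_of_hasSum_mul_pow {e : ℕ → ℝ}
    (h : ∀ᶠ q in 𝓝[>] (0 : ℝ), HasSum (fun n => e n * q ^ n) 0) : e = 0 := by
  set p := FormalMultilinearSeries.ofScalars ℝ e
  obtain ⟨r, hr, hr0⟩ := (h.and self_mem_nhdsWithin).exists
  lift r to NNReal using hr0.le
  have hradius : 0 < p.radius := by
    refine lt_of_lt_of_le ?_ (p.le_radius_of_summable_norm (r := r) ?_)
    · exact_mod_cast hr0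
    · simpa [p, FormalMultilinearSeries.ofScalars_norm, abs_mul] using hr.summable.abs
  have hp := (p.hasFPowerSeriesOnBall hradius).hasFPowerSeriesAt
  have hsum : ∀ᶠ q in 𝓝[>] 0, p.sum q = 0 := h.mono fun q hq => by
    change FormalMultilinearSeries.ofScalarsSum e q = 0
    simpa [FormalMultilinearSeries.ofScalarsSum_eq_tsum] using hq.tsum_eq
  have hzero := hp.analyticAt.frequently_zero_iff_eventually_zero.1
    (hsum.frequently.filter_mono (nhdsWithin_mono _ fun x hx => ne_of_gt hx))
  exact (FormalMultilinearSeries.ofScalars_series_eq_zero ℝ).1 (hp.eq_zero_of_eventually hzero)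

theorem eq_of_hasSum_mul_pow {a b : ℕ → ℝ} {f : ℝ → ℝ}
    (ha : ∀ᶠ q in 𝓝[>] (0 : ℝ), HasSum (fun n => a n * q ^ n) (f q))
    (hb : ∀ᶠ q in 𝓝[>] (0 : ℝ), HasSum (fun n => b n * q ^ n) (f q)) : a = b :=
  sub_eq_zero.1 <| eq_zero_of_hasSum_mul_pow <| (ha.and hb).mono fun q h => by
    simpa [sub_mul] using h.1.sub h.2

def HasNonnegCoeffs (f : ℝ → ℝ) : Prop :=
  ∃ c : ℕ → ℝ, 0 ≤ c ∧ ∀ q ∈ Set.Ioo (0 : ℝ) 1, HasSum (fun n => c n * q ^ n) (f q)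

namespace HasNonnegCoeffs

variable {f g : ℝ → ℝ}

theorem congr (hf : HasNonnegCoeffs f) (hfg : ∀ q ∈ Set.Ioo (0 : ℝ) 1, f q = g q) :
    HasNonnegCoeffs g := by
  obtain ⟨c, hc0, hc⟩ := hf
  exact ⟨c, hc0, fun q hq => hfg q hq ▸ hc q hq⟩

theorem X_pow (k : ℕ) : HasNonnegCoeffs (· ^ k) := by
  refine ⟨Pi.single k 1, Pi.single_nonneg.2 zero_le_one, fun q _ => ?_⟩
  convert hasSum_single (f := fun n => (Pi.single k 1 : ℕ → ℝ) n * q ^ n) k fun n hn => ?_ <;>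
    simp_all

theorem one : HasNonnegCoeffs 1 :=
  (X_pow 0).congr fun q _ => pow_zero q

theorem add (hf : HasNonnegCoeffs f) (hg : HasNonnegCoeffs g) : HasNonnegCoeffs (f + g) := by
  obtain ⟨c, hc0, hc⟩ := hf
  obtain ⟨d, hd0, hd⟩ := hg
  exact ⟨c + d, add_nonneg hc0 hd0, fun q hq => by simpa [add_mul] using (hc q hq).add (hd q hq)⟩

theorem mul (hf : HasNonnegCoeffs f) (hg : HasNonnegCoeffs g) : HasNonnegCoeffs (f * g) := by
  obtain ⟨c, hc0, hc⟩ := hf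
  obtain ⟨d, hd0, hd⟩ := hg
  exact ⟨fun n => ∑ kl ∈ antidiagonal n, c kl.1 * d kl.2,
    fun n => sum_nonneg fun kl _ => mul_nonneg (hc0 _) (hd0 _),
    fun q hq => (hc q hq).mul_pow_antidiagonal (hd q hq)⟩

theorem pow (hf : HasNonnegCoeffs f) (m : ℕ) : HasNonnegCoeffs (f ^ m) := by
  induction m with
  | zero => simpa using one
  | succ m ih => simpa [pow_succ] using ih.mul hf

theorem prod {ι : Type*} {s : Finset ι} {F : ι → ℝ → ℝ} (hF : ∀ i ∈ s, HasNonnegCoeffs (F i)) :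
    HasNonnegCoeffs (∏ i ∈ s, F i) :=
  prod_induction F HasNonnegCoeffs (fun _ _ => mul) one hF

theorem of_hasSum {ι : Type*} {F : ι → ℝ → ℝ} (hF : ∀ i, HasNonnegCoeffs (F i))
    (hg : ∀ q ∈ Set.Ioo (0 : ℝ) 1, HasSum (fun i => F i q) (g q)) : HasNonnegCoeffs g := by
  choose β hβ0 hβ using hF
  refine ⟨fun m => ∑' i, β i m, fun m => tsum_nonneg fun i => hβ0 i m, fun q hq => ?_⟩
  have hsummable : Summable fun x : ι × ℕ => β x.1 x.2 * q ^ x.2 :=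
    (summable_prod_of_nonneg fun x => mul_nonneg (hβ0 _ _) (pow_nonneg hq.1.le _)).2
      ⟨fun i => (hβ i q hq).summable,
        (hg q hq).summable.congr fun i => ((hβ i q hq).tsum_eq).symm⟩
  have htotal : HasSum (fun x : ι × ℕ => β x.1 x.2 * q ^ x.2) (g q) := by
    convert hsummable.hasSum
    exact (hg q hq).unique (hsummable.hasSum.prod_fiberwise fun i => hβ i q hq)
  have hswap := (Equiv.prodComm ℕ ι).hasSum_iff.2 htotal
  refine hswap.prod_fiberwise fun m => ?_
  have hcol : Summable fun i => β i m * q ^ m := hswap.summable.prod_factor m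
  exact ((summable_mul_right_iff (pow_ne_zero m hq.1.ne')).1 hcol).hasSum.mul_right _

theorem inv_one_sub_X_pow {k : ℕ} (hk : k ≠ 0) : HasNonnegCoeffs fun q => (1 - q ^ k)⁻¹ :=
  of_hasSum (fun j => X_pow (k * j)) fun q hq => by
    simpa [pow_mul] using hasSum_geometric_of_lt_one (pow_nonneg hq.1.le k)
      (pow_lt_one₀ hq.1.le hq.2 hk)

end HasNonnegCoeffs

/-- `U2series q = ∑' n, u2Term n q` holds definitionally. -/
noncomputable def u2Term (n : ℕ) (q : ℝ) : ℝ :=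
  (∏ j ∈ range n, (1 + q ^ 2 * (q ^ 2) ^ j)) ^ 2 * q ^ (2 * (n + 1)) /
    ∏ j ∈ range (n + 1), (1 - q * (q ^ 2) ^ j)

theorem u2Term_succ (n : ℕ) (q : ℝ) :
    u2Term (n + 1) q =
      u2Term n q * ((1 + q ^ 2 * (q ^ 2) ^ n) ^ 2 * q ^ 2 / (1 - q * (q ^ 2) ^ (n + 1))) := by
  rw [u2Term, u2Term, prod_range_succ (fun j => 1 + q ^ 2 * (q ^ 2) ^ j) n,
    prod_range_succ (fun j => 1 - q * (q ^ 2) ^ j) (n + 1), mul_pow, div_mul_div_comm]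
  ring

theorem u2Term_pos {q : ℝ} (hq : q ∈ Set.Ioo (0 : ℝ) 1) (n : ℕ) : 0 < u2Term n q := by
  have hfactor : ∀ j, 0 < 1 - q * (q ^ 2) ^ j := fun j => by
    rw [← pow_mul, ← pow_succ', sub_pos]
    exact pow_lt_one₀ hq.1.le hq.2 (Nat.succ_ne_zero _)
  have hq₀ : 0 < q := hq.1
  unfold u2Term
  exact div_pos (by positivity) (prod_pos fun j _ => hfactor j)

theorem summable_u2Term {q : ℝ} (hq : q ∈ Set.Ioo (0 : ℝ) 1) : Summable fun n => u2Term n q := by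
  have hgeom : Tendsto (fun n : ℕ => (q ^ 2) ^ n) atTop (𝓝 0) :=
    tendsto_pow_atTop_nhds_zero_of_lt_one (sq_nonneg q) (pow_lt_one₀ hq.1.le hq.2 two_ne_zero)
  have hratio : Tendsto (fun n => (1 + q ^ 2 * (q ^ 2) ^ n) ^ 2 * q ^ 2 / (1 - q * (q ^ 2) ^ (n + 1)))
      atTop (𝓝 (q ^ 2)) := by
    have := (((hgeom.const_mul (q ^ 2)).const_add 1).pow 2).mul_const (q ^ 2) |>.div
      (((hgeom.comp (tendsto_add_atTop_nat 1)).const_mul q).const_sub 1) (by norm_num)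
    simp only [mul_zero, add_zero, one_pow, one_mul, sub_zero, div_one] at this
    exact this
  refine summable_of_ratio_test_tendsto_lt_one (pow_lt_one₀ hq.1.le hq.2 two_ne_zero)
    (Eventually.of_forall fun n => (u2Term_pos hq n).ne') (hratio.congr fun n => ?_)
  rw [Real.norm_of_nonneg (u2Term_pos hq _).le, Real.norm_of_nonneg (u2Term_pos hq _).le,
    u2Term_succ, mul_div_cancel_left₀ _ (u2Term_pos hq n).ne']

theorem hasNonnegCoeffs_one_sub_mul_u2Term (n : ℕ) :
    HasNonnegCoeffs fun q => (1 - q) * u2Term n q := by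
  have hnum := HasNonnegCoeffs.prod (s := range n) (F := fun j q => 1 + q ^ (2 * j + 2))
    fun j _ => HasNonnegCoeffs.one.add (HasNonnegCoeffs.X_pow _)
  have hden := HasNonnegCoeffs.prod (s := range n) (F := fun j q => (1 - q ^ (2 * j + 3))⁻¹)
    fun j _ => HasNonnegCoeffs.inv_one_sub_X_pow (by omega)
  refine ((hnum.pow 2).mul (HasNonnegCoeffs.X_pow (2 * (n + 1)))).mul hden |>.congr fun q hq => ?_
  simp only [Pi.mul_apply, Pi.pow_apply, Finset.prod_apply]
  have hnum_eq : ∏ j ∈ range n, (1 + q ^ 2 * (q ^ 2) ^ j) = ∏ j ∈ range n, (1 + q ^ (2 * j + 2)) :=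
    prod_congr rfl fun j _ => by ring
  have hden_eq :
      ∏ j ∈ range n, (1 - q * (q ^ 2) ^ (j + 1)) = ∏ j ∈ range n, (1 - q ^ (2 * j + 3)) :=
    prod_congr rfl fun j _ => by ring
  have hq₁ : 1 - q ≠ 0 := sub_ne_zero.2 hq.2.ne'
  rw [u2Term, prod_range_succ', hnum_eq, hden_eq, prod_inv_distrib]
  field_simp

theorem stmt5 (u2 : ℕ → ℝ)
    (h : ∀ q : ℝ, 0 < q → q < 1 → HasSum (fun n => u2 n * q ^ n) (U2series q)) :
    ∀ n : ℕ, u2 n ≤ u2 (n + 1) := by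
  obtain ⟨c, hc0, hc⟩ : HasNonnegCoeffs fun q => (1 - q) * U2series q :=
    HasNonnegCoeffs.of_hasSum hasNonnegCoeffs_one_sub_mul_u2Term fun q hq =>
      (summable_u2Term hq).hasSum.mul_left (1 - q)
  have hpartial : ∀ q ∈ Set.Ioo (0 : ℝ) 1,
      HasSum (fun n => (∑ k ∈ range (n + 1), c k) * q ^ n) (U2series q) := fun q hq => by
    have := (hc q hq).partialSums_mul_pow (abs_lt.2 ⟨by linarith [hq.1], hq.2⟩)
    rwa [mul_comm, ← mul_assoc, inv_mul_cancel₀ (sub_ne_zero.2 hq.2.ne'), one_mul] at this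
  have hu2 : u2 = fun n => ∑ k ∈ range (n + 1), c k :=
    eq_of_hasSum_mul_pow (eventually_of_mem (Ioo_mem_nhdsGT one_pos) fun q hq => h q hq.1 hq.2)
      (eventually_of_mem (Ioo_mem_nhdsGT one_pos) hpartial)
  intro n
  simpa [hu2, sum_range_succ _ (n + 1)] using hc0 (n + 1)
end

section
/- For $0<|q|<1$, the double-sum identity $\sum_{n\geq 0}\sum_{0 \le j \le n} (1+q^{2j+1})\, q^{3n^2+6n-2j^2-3j+2} = \sum_{n \geq 1} \sum_{-n/3 \le j \le n/3,\ j\in\mathbb{Z}} q^{n^2+n-6j^2-3j}$ holds. -/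
/-!
Expanding `(1 + q ^ (2j+1))` splits each term on the left into two monomials, indexed by
`(n, j, b)` with `j ≤ n` and `b` recording which of the two is meant. Both sides are then sums of
`q ^ e` over an index set, and an explicit bijection between the two index sets preserves the
exponent: with `n'` the outer index on the right, `(n, j, false) ↦ (3n - 2j, n - j)` hits the
pairs with `0 ≤ 3k ≤ n'`, `(n, 0, true) ↦ (3n + 2, n + 1)` those with `3k = n' + 1`, and
`(n, j, true) ↦ (3n - 2j + 1, j - n - 1)` for `j ≥ 1` those with `k < 0`. Absolute convergence
lets both sides be regrouped along these index sets.
-/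

open Set

theorem tsum_subtype_eq_tsum_finsetSum {α β M : Type*} [AddCommGroup M] [UniformSpace M]
    [IsUniformAddGroup M] [CompleteSpace M] [T0Space M] {s : Set (α × β)} (t : α → Finset β)
    (hst : ∀ a b, (a, b) ∈ s ↔ b ∈ t a) {f : α × β → M} (hf : Summable fun p : s => f p) :
    ∑' p : s, f p = ∑' a, ∑ b ∈ t a, f (a, b) := by
  have hf' := summable_subtype_iff_indicator.1 hf
  rw [tsum_subtype, hf'.tsum_prod' hf'.prod_factor]
  refine tsum_congr fun a => ?_
  rw [tsum_eq_sum (s := t a) fun b hb => indicator_of_notMem (mt (hst a b).1 hb) _]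
  exact Finset.sum_congr rfl fun b hb => indicator_of_mem ((hst a b).2 hb) _

theorem norm_zpow_le_pow_of_le {𝕜 : Type*} [NormedDivisionRing 𝕜] {q : 𝕜} (hq : ‖q‖ ≤ 1)
    {m : ℕ} {e : ℤ} (he : m ≤ e) : ‖q ^ e‖ ≤ ‖q‖ ^ m := by
  lift e to ℕ using (Int.natCast_nonneg m).trans he
  rw [zpow_natCast, norm_pow]
  exact pow_le_pow_of_le_one (norm_nonneg q) hq (mod_cast he)

namespace U2DoubleSum

def leftExp : ℕ × ℕ × Bool → ℤ
  | (n, j, b) =>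
    3 * (n : ℤ) ^ 2 + 6 * n - 2 * (j : ℤ) ^ 2 - 3 * j + 2 + bif b then 2 * (j : ℤ) + 1 else 0

def rightExp (p : ℕ × ℤ) : ℤ :=
  ((p.1 : ℤ) + 1) ^ 2 + ((p.1 : ℤ) + 1) - 6 * p.2 ^ 2 - 3 * p.2

def leftIndex : Set (ℕ × ℕ × Bool) := {p | p.2.1 ≤ p.1}

def rightIndex : Set (ℕ × ℤ) := {p | -((p.1 : ℤ) + 1) ≤ 3 * p.2 ∧ 3 * p.2 ≤ (p.1 : ℤ) + 1}

def leftToRight : ℕ × ℕ × Bool → ℕ × ℤ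
  | (n, j, false) => (3 * n - 2 * j, (n : ℤ) - j)
  | (n, j, true) =>
    if j = 0 then (3 * n + 2, (n : ℤ) + 1) else (3 * n - 2 * j + 1, (j : ℤ) - n - 1)

def rightToLeft (p : ℕ × ℤ) : ℕ × ℕ × Bool :=
  if p.2 < 0 then ((p.1 + 2 * p.2 + 1).toNat, (p.1 + 3 * p.2 + 2).toNat, true)
  else if 3 * p.2 = p.1 + 1 then ((p.2 - 1).toNat, 0, true)
  else ((p.1 - 2 * p.2).toNat, (p.1 - 3 * p.2).toNat, false)

theorem mapsTo_leftToRight : MapsTo leftToRight leftIndex rightIndex := by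
  rintro ⟨n, j, _ | _⟩ (h : j ≤ n) <;> dsimp only [leftToRight, rightIndex, mem_ofPred_eq]
  · omega
  · split_ifs <;> dsimp only <;> omega

theorem mapsTo_rightToLeft : MapsTo rightToLeft rightIndex leftIndex := by
  rintro ⟨N, k⟩ ⟨hlo, hhi⟩
  dsimp only [rightToLeft, leftIndex, mem_ofPred_eq]
  split_ifs <;> dsimp only <;> omega

theorem invOn_rightToLeft : InvOn rightToLeft leftToRight leftIndex rightIndex := by
  constructor
  · rintro ⟨n, j, _ | _⟩ (h : j ≤ n) <;> dsimp only [leftToRight] <;> (try split_ifs) <;>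
      dsimp only [rightToLeft] <;> split_ifs <;>
      simp only [Prod.mk.injEq, Bool.true_eq_false, Bool.false_eq_true, and_true, and_false] <;>
      omega
  · rintro ⟨N, k⟩ ⟨hlo, hhi⟩
    dsimp only [rightToLeft]
    split_ifs <;> dsimp only [leftToRight] <;> (try split_ifs) <;> simp only [Prod.mk.injEq] <;>
      omega

theorem rightExp_leftToRight {p : ℕ × ℕ × Bool} (hp : p ∈ leftIndex) :
    rightExp (leftToRight p) = leftExp p := by
  obtain ⟨n, j, _ | _⟩ := p <;> replace hp : j ≤ n := hp <;> dsimp only [leftToRight]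
  · rw [rightExp, leftExp, show ((3 * n - 2 * j : ℕ) : ℤ) = 3 * n - 2 * j by omega]
    simp only [cond_false]
    ring
  · split_ifs with hj
    · subst hj; simp only [rightExp, leftExp, cond_true]; push_cast; ring
    · rw [rightExp, leftExp, show ((3 * n - 2 * j + 1 : ℕ) : ℤ) = 3 * n - 2 * j + 1 by omega]
      simp only [cond_true]; ring

theorem natCast_add_lt_leftExp {p : ℕ × ℕ × Bool} (hp : p ∈ leftIndex) :
    ((p.1 + p.2.1 : ℕ) : ℤ) < leftExp p := by
  obtain ⟨n, j, _ | _⟩ := p <;> replace hp : (j : ℤ) ≤ n := Int.ofNat_le.2 hp <;>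
    simp only [leftExp, cond_true, cond_false, Nat.cast_add] <;> nlinarith

theorem summable_zpow_leftExp {𝕜 : Type*} [NormedField 𝕜] [CompleteSpace 𝕜] {q : 𝕜}
    (hq : ‖q‖ < 1) : Summable fun p : leftIndex => q ^ leftExp p := by
  have hgeo : Summable fun n : ℕ => ‖q‖ ^ n := summable_geometric_of_lt_one (norm_nonneg q) hq
  have hmaj : Summable fun p : ℕ × ℕ × Bool => ‖q‖ ^ p.1 * (‖q‖ ^ p.2.1 * 1) :=
    hgeo.mul_of_nonneg (hgeo.mul_of_nonneg Summable.of_finite (fun _ => by positivity)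
      (fun _ => zero_le_one)) (fun _ => by positivity) (fun _ => by positivity)
  refine Summable.of_norm_bounded (hmaj.subtype leftIndex) fun p => ?_
  calc ‖q ^ leftExp p‖ ≤ ‖q‖ ^ (p.1.1 + p.1.2.1) :=
        norm_zpow_le_pow_of_le hq.le (natCast_add_lt_leftExp p.2).le
    _ = _ := by simp [pow_add]

theorem sum_range_zpow_leftExp {K : Type*} [Field K] (q : K) (n : ℕ) :
    ∑ w ∈ Finset.range (n + 1) ×ˢ Finset.univ, q ^ leftExp (n, w) =
      ∑ j ∈ Finset.range (n + 1),
        (1 + q ^ (2 * j + 1)) * q ^ (3 * n ^ 2 + 6 * n - 2 * j ^ 2 - 3 * j + 2 : ℤ) := by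
  rw [Finset.sum_product]
  refine Finset.sum_congr rfl fun j hj => ?_
  have hj : j ≤ n := Nat.lt_succ_iff.1 (Finset.mem_range.1 hj)
  have hpos : 0 < leftExp (n, j, true) :=
    (Int.natCast_nonneg _).trans_lt (natCast_add_lt_leftExp hj)
  rw [Fintype.sum_bool]
  simp only [leftExp, cond_true, cond_false, add_zero] at hpos ⊢
  rw [zpow_add' (Or.inr (Or.inl hpos.ne'))]
  norm_cast
  ring

noncomputable def leftIndexEquiv : leftIndex ≃ rightIndex :=
  (invOn_rightToLeft.bijOn mapsTo_leftToRight mapsTo_rightToLeft).equiv leftToRight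

theorem tsum_zpow_leftExp_eq_tsum_zpow_rightExp {𝕜 : Type*} [NormedField 𝕜] (q : 𝕜) :
    ∑' p : leftIndex, q ^ leftExp p = ∑' p : rightIndex, q ^ rightExp p := by
  rw [← leftIndexEquiv.tsum_eq]
  exact tsum_congr fun p => congrArg (q ^ ·) (rightExp_leftToRight p.2).symm

theorem summable_zpow_rightExp {𝕜 : Type*} [NormedField 𝕜] [CompleteSpace 𝕜] {q : 𝕜}
    (hq : ‖q‖ < 1) : Summable fun p : rightIndex => q ^ rightExp p := by
  rw [← leftIndexEquiv.summable_iff]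
  exact (summable_zpow_leftExp hq).congr fun p => congrArg (q ^ ·) (rightExp_leftToRight p.2).symm

end U2DoubleSum

open U2DoubleSum

theorem stmt7_general (q : ℂ) (h1 : ‖q‖ < 1) :
    (∑' n : ℕ, ∑ j ∈ Finset.range (n + 1),
        (1 + q ^ (2 * j + 1)) * q ^ (3 * n ^ 2 + 6 * n - 2 * j ^ 2 - 3 * j + 2 : ℤ)) =
      ∑' n : ℕ, ∑ j ∈ (Finset.Icc (-((n : ℤ) + 1)) ((n : ℤ) + 1)).filter
          (fun j => -((n : ℤ) + 1) ≤ 3 * j ∧ 3 * j ≤ (n : ℤ) + 1),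
        q ^ (((n : ℤ) + 1) ^ 2 + ((n : ℤ) + 1) - 6 * j ^ 2 - 3 * j) := by
  calc _ = ∑' n : ℕ, ∑ w ∈ Finset.range (n + 1) ×ˢ Finset.univ, q ^ leftExp (n, w) :=
        tsum_congr fun n => (sum_range_zpow_leftExp q n).symm
    _ = ∑' p : leftIndex, q ^ leftExp p :=
        (tsum_subtype_eq_tsum_finsetSum (f := fun p => q ^ leftExp p) _
          (fun n w => by simp [leftIndex]) (summable_zpow_leftExp h1)).symm
    _ = ∑' p : rightIndex, q ^ rightExp p := tsum_zpow_leftExp_eq_tsum_zpow_rightExp q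
    _ = _ := tsum_subtype_eq_tsum_finsetSum (f := fun p => q ^ rightExp p) _
          (fun N k => by simp [rightIndex]; omega) (summable_zpow_rightExp h1)

theorem stmt7 (q : ℂ) (h0 : 0 < ‖q‖) (h1 : ‖q‖ < 1) :
    (∑' n : ℕ, ∑ j ∈ Finset.range (n + 1),
        (1 + q ^ (2 * j + 1)) * q ^ (3 * n ^ 2 + 6 * n - 2 * j ^ 2 - 3 * j + 2 : ℤ)) =
      ∑' n : ℕ, ∑ j ∈ (Finset.Icc (-((n : ℤ) + 1)) ((n : ℤ) + 1)).filter
          (fun j => -((n : ℤ) + 1) ≤ 3 * j ∧ 3 * j ≤ (n : ℤ) + 1),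
        q ^ (((n : ℤ) + 1) ^ 2 + ((n : ℤ) + 1) - 6 * j ^ 2 - 3 * j) :=
  stmt7_general q h1
end

section
/- Let $m$ be a positive integer and consider solutions $(u,v) \in \mathbb{Z}^2$ to $u^2 - 6v^2 = m$, where two solutions $(u,v)$ and $(u',v')$ are equivalent if $u' + v'\sqrt{6} = \pm(5+2\sqrt{6})^r (u+v\sqrt{6})$ for some $r \in \mathbb{Z}$. Then every equivalence class of solutions contains exactly one solution $(u,v)$ with $u > 0$ and $-u/3 < v \le u/3$. -/
/-!
Put `ε = 5 + 2√6`, `α = x + y√6` and `ᾱ = x - y√6`, so that `αᾱ = x² - 6y² = m > 0`.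
Since `εα - ᾱ = (4 + 2√6)(x + 3y)` and `εᾱ - α = (4 + 2√6)(x - 3y)`, the conditions
`0 < x`, `-x < 3y ≤ x` say exactly that `α > 0` and `α² ∈ (m/ε, εm]`.
The positive members of a class are the numbers `ε^r |u + v√6|`, `r ∈ ℤ`, whose squares form
the orbit of `|u + v√6|²` under multiplication by `ε²`; such an orbit meets every half-open
interval `(c, ε²c]` exactly once.
-/

/-- Two solutions `(u,v)` and `(u',v')` of the Pell-type equation `u² - 6v² = m` are
equivalent if `u' + v'√6 = ±(5 + 2√6)^r (u + v√6)` for some integer `r`. -/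
def PellEquiv (u v u' v' : ℤ) : Prop :=
  ∃ r : ℤ,
    (u' : ℝ) + (v' : ℝ) * Real.sqrt 6 =
        (5 + 2 * Real.sqrt 6) ^ r * ((u : ℝ) + (v : ℝ) * Real.sqrt 6) ∨
    (u' : ℝ) + (v' : ℝ) * Real.sqrt 6 =
        -((5 + 2 * Real.sqrt 6) ^ r * ((u : ℝ) + (v : ℝ) * Real.sqrt 6))

open Set

theorem existsUnique_zpow_mul_mem_Ioc {K : Type*} [Field K] [LinearOrder K]
    [IsStrictOrderedRing K] [Archimedean K] {a b c : K} (ha : 1 < a) (hb : 0 < b) (hc : 0 < c) :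
    ∃! n : ℤ, a ^ n * b ∈ Ioc c (a * c) := by
  have ha₀ : 0 < a := zero_lt_one.trans ha
  obtain ⟨k, hk_le, hk_lt⟩ := exists_mem_Ico_zpow (div_pos hc hb) ha
  refine ⟨k + 1, ⟨(div_lt_iff₀ hb).mp hk_lt, ?_⟩, fun n ⟨hn_gt, hn_le⟩ => ?_⟩
  · rw [zpow_add_one₀ ha₀.ne', mul_comm _ a, mul_assoc]
    exact mul_le_mul_of_nonneg_left ((le_div_iff₀ hb).mp hk_le) ha₀.le
  · have h_lo : k < n :=
      (zpow_lt_zpow_iff_right₀ ha).mp (hk_le.trans_lt ((div_lt_iff₀ hb).mpr hn_gt))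
    have h_hi : n - 1 < k + 1 := by
      refine (zpow_lt_zpow_iff_right₀ ha).mp (lt_of_le_of_lt ?_ hk_lt)
      rw [le_div_iff₀ hb, zpow_sub_one₀ ha₀.ne', mul_right_comm, mul_inv_le_iff₀ ha₀, mul_comm c]
      exact hn_le
    omega

theorem Units.map_val_zpow {R K F : Type*} [Monoid R] [GroupWithZero K] [FunLike F R K]
    [MonoidHomClass F R K] (f : F) (u : Rˣ) (r : ℤ) : f ((u ^ r : Rˣ) : R) = f u ^ r := by
  change ((Units.map (f : R →* K) (u ^ r) : Kˣ) : K) = _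
  rw [map_zpow, Units.val_zpow_eq_zpow_val]
  rfl

theorem Zsqrtd.norm_val_zpow_of_norm_eq_one {d : ℤ} {η : (ℤ√d)ˣ} (hη : (η : ℤ√d).norm = 1)
    (r : ℤ) : ((η ^ r : (ℤ√d)ˣ) : ℤ√d).norm = 1 := by
  have h : Units.map normMonoidHom η = 1 := Units.ext hη
  change ((Units.map normMonoidHom (η ^ r) : ℤˣ) : ℤ) = 1
  rw [map_zpow, h, one_zpow, Units.val_one]

local notation "ε" => (5 + 2 * Real.sqrt 6 : ℝ)

lemma one_lt_five_add_two_mul_sqrt_six : 1 < ε := by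
  have : 0 < Real.sqrt 6 := by positivity
  linarith

lemma six_ne_mul_self (n : ℤ) : (6 : ℤ) ≠ n * n := by
  intro h
  have : -3 < n := by nlinarith
  have : n < 3 := by nlinarith
  interval_cases n <;> omega

noncomputable def toReal6 : ℤ√6 →+* ℝ := Zsqrtd.toReal (by norm_num)

lemma toReal6_apply (a : ℤ√6) : toReal6 a = a.re + a.im * Real.sqrt 6 := by
  simp [toReal6]

lemma toReal6_injective : Function.Injective toReal6 :=
  Zsqrtd.toReal_injective _ six_ne_mul_self

lemma toReal6_mul_toReal6_star (a : ℤ√6) : toReal6 a * toReal6 (star a) = a.norm := by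
  rw [← map_mul, ← Zsqrtd.norm_eq_mul_conj, map_intCast]

lemma toReal6_ne_zero {a : ℤ√6} (ha : a.norm ≠ 0) : toReal6 a ≠ 0 := fun h => by
  have := toReal6_mul_toReal6_star a
  rw [h, zero_mul] at this
  exact ha (by exact_mod_cast this.symm)

lemma norm_eq_sq_sub (a : ℤ√6) : a.norm = a.re ^ 2 - 6 * a.im ^ 2 := by
  rw [Zsqrtd.norm_def]; ring

def pellUnit : (ℤ√6)ˣ :=
  ⟨⟨5, 2⟩, ⟨5, -2⟩, by ext <;> rfl, by ext <;> rfl⟩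

lemma toReal6_pellUnit_zpow (r : ℤ) : toReal6 ↑(pellUnit ^ r) = ε ^ r := by
  rw [Units.map_val_zpow, toReal6_apply]
  norm_num [pellUnit]

lemma norm_pellUnit_zpow (r : ℤ) : (↑(pellUnit ^ r) : ℤ√6).norm = 1 :=
  Zsqrtd.norm_val_zpow_of_norm_eq_one rfl r

lemma exists_norm_eq_toReal6_eq_abs (u v : ℤ) :
    ∃ a : ℤ√6, a.norm = u ^ 2 - 6 * v ^ 2 ∧ toReal6 a = |(u : ℝ) + v * Real.sqrt 6| := by
  have h_norm : (⟨u, v⟩ : ℤ√6).norm = u ^ 2 - 6 * v ^ 2 := norm_eq_sq_sub _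
  have h_val : toReal6 ⟨u, v⟩ = u + v * Real.sqrt 6 := toReal6_apply _
  rcases abs_choice ((u : ℝ) + v * Real.sqrt 6) with h | h
  · exact ⟨⟨u, v⟩, h_norm, by rw [h, h_val]⟩
  · exact ⟨-⟨u, v⟩, by rw [Zsqrtd.norm_neg, h_norm], by rw [h, map_neg, h_val]⟩

lemma fundamentalDomain_iff_sq_mem_Ioc {a : ℤ√6} (ha : 0 < a.norm) :
    (0 < a.re ∧ -a.re < 3 * a.im ∧ 3 * a.im ≤ a.re) ↔
      0 < toReal6 a ∧ toReal6 a ^ 2 ∈ Ioc (a.norm / ε) (ε ^ 2 * (a.norm / ε)) := by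
  have hs : Real.sqrt 6 ^ 2 = 6 := Real.sq_sqrt (by norm_num)
  set α := toReal6 a
  set β := toReal6 (star a)
  have hαβ : α * β = a.norm := toReal6_mul_toReal6_star a
  have hα : α = a.re + a.im * Real.sqrt 6 := toReal6_apply a
  have hβ : β = a.re - a.im * Real.sqrt 6 := by
    rw [show β = toReal6 (star a) from rfl, toReal6_apply, Zsqrtd.re_star, Zsqrtd.im_star]
    push_cast; ring
  have h_re : 0 < a.re ↔ 0 < α := by
    have h_prod : 0 < α * β := hαβ ▸ Int.cast_pos.mpr ha
    have h_sum : α + β = 2 * a.re := by rw [hα, hβ]; ring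
    rw [← Int.cast_pos (R := ℝ)]
    constructor <;> intro h <;> nlinarith
  have h_lo : -a.re < 3 * a.im ↔ β < ε * α := by
    have h_diff : ε * α - β = (4 + 2 * Real.sqrt 6) * (a.re + 3 * a.im) := by
      rw [hα, hβ]; linear_combination (2 * a.im : ℝ) * hs
    rw [← sub_pos (b := β), h_diff, mul_pos_iff_of_pos_left (by positivity),
      show -a.re < 3 * a.im ↔ 0 < a.re + 3 * a.im by omega]
    exact_mod_cast Iff.rfl
  have h_hi : 3 * a.im ≤ a.re ↔ α ≤ ε * β := by
    have h_diff : ε * β - α = (4 + 2 * Real.sqrt 6) * (a.re - 3 * a.im) := by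
      rw [hα, hβ]; linear_combination (-2 * a.im : ℝ) * hs
    rw [← sub_nonneg (b := α), h_diff, mul_nonneg_iff_of_pos_left (by positivity),
      show 3 * a.im ≤ a.re ↔ 0 ≤ a.re - 3 * a.im by omega]
    exact_mod_cast Iff.rfl
  rw [h_re, h_lo, h_hi]
  refine and_congr_right fun hα_pos => ?_
  have h_top : ε ^ 2 * (a.norm / ε) = α * (ε * β) := by
    rw [← hαβ]; field_simp
  rw [mem_Ioc, h_top, div_lt_iff₀ (by positivity), ← hαβ, sq, mul_assoc, mul_comm α ε,
    mul_lt_mul_iff_right₀ hα_pos, mul_le_mul_iff_right₀ hα_pos]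

lemma exists_abs_eq_zpow_mul_abs_of_pellEquiv {u v x y : ℤ} (h : PellEquiv u v x y) :
    ∃ r : ℤ, |(x : ℝ) + y * Real.sqrt 6| = ε ^ r * |(u : ℝ) + v * Real.sqrt 6| := by
  obtain ⟨r, h⟩ := h
  refine ⟨r, ?_⟩
  rw [← abs_of_pos (zpow_pos (by positivity : 0 < ε) r), ← abs_mul]
  rcases h with h | h <;> simp only [h, abs_neg]

lemma pellEquiv_of_eq_zpow_mul_abs {u v x y r : ℤ}
    (h : (x : ℝ) + y * Real.sqrt 6 = ε ^ r * |(u : ℝ) + v * Real.sqrt 6|) :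
    PellEquiv u v x y := by
  refine ⟨r, ?_⟩
  rcases abs_choice ((u : ℝ) + v * Real.sqrt 6) with h' | h' <;> rw [h'] at h
  · exact Or.inl h
  · exact Or.inr (by rw [h]; ring)

theorem stmt10 (m : ℤ) (hm : 0 < m) (u v : ℤ) (huv : u ^ 2 - 6 * v ^ 2 = m) :
    ∃! p : ℤ × ℤ, p.1 ^ 2 - 6 * p.2 ^ 2 = m ∧ PellEquiv u v p.1 p.2 ∧
      0 < p.1 ∧ -p.1 < 3 * p.2 ∧ 3 * p.2 ≤ p.1 := by
  set w : ℝ := u + v * Real.sqrt 6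
  obtain ⟨a, ha_norm, ha_val⟩ := exists_norm_eq_toReal6_eq_abs u v
  rw [huv] at ha_norm
  have hw : 0 < |w| := (abs_nonneg w).lt_of_ne' (ha_val ▸ toReal6_ne_zero (ha_norm ▸ hm.ne'))
  obtain ⟨r, hr, hr_unique⟩ := existsUnique_zpow_mul_mem_Ioc
    (one_lt_pow₀ one_lt_five_add_two_mul_sqrt_six two_ne_zero) (pow_pos hw 2)
    (div_pos (Int.cast_pos.mpr hm) (by positivity : 0 < ε))
  have sq_zpow_mul (s : ℤ) : (ε ^ s * |w|) ^ 2 = (ε ^ 2) ^ s * |w| ^ 2 := by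
    rw [mul_pow, ← zpow_natCast, zpow_comm, zpow_natCast]
  set b : ℤ√6 := ↑(pellUnit ^ r) * a
  have hb_norm : b.norm = m := by rw [Zsqrtd.norm_mul, norm_pellUnit_zpow, one_mul, ha_norm]
  have hb_val : toReal6 b = ε ^ r * |w| := by rw [map_mul, toReal6_pellUnit_zpow, ha_val]
  refine ⟨(b.re, b.im), ⟨by rw [← norm_eq_sq_sub, hb_norm],
    pellEquiv_of_eq_zpow_mul_abs (r := r) (by rw [← toReal6_apply, hb_val]), ?_⟩, ?_⟩
  · rw [fundamentalDomain_iff_sq_mem_Ioc (hb_norm ▸ hm), hb_val, hb_norm, sq_zpow_mul]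
    exact ⟨by positivity, hr⟩
  · rintro ⟨x, y⟩ ⟨hc_norm, hc_equiv, hc_dom⟩
    replace hc_norm : (⟨x, y⟩ : ℤ√6).norm = m := (norm_eq_sq_sub _).trans hc_norm
    obtain ⟨hc_pos, hc_mem⟩ := (fundamentalDomain_iff_sq_mem_Ioc (hc_norm ▸ hm)).mp hc_dom
    obtain ⟨s, hs⟩ := exists_abs_eq_zpow_mul_abs_of_pellEquiv hc_equiv
    rw [← toReal6_apply ⟨x, y⟩, abs_of_pos hc_pos] at hs
    rw [hs, sq_zpow_mul, hc_norm] at hc_mem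
    obtain rfl := hr_unique s hc_mem
    rw [← toReal6_injective (hs.trans hb_val.symm)]
end

section
/- As $q \to 1^-$ along the real axis, $\lim_{q\to 1^-} \sum_{n\geq 0} \frac{q^{2n^2}}{(-q^3;q^2)_n(-q;q^2)_n} = \frac{4}{3}$. -/
/-!
Write the `n`-th summand as a product of `n` factors
`q ^ (4j+2) / ((1 + q ^ (2j+3)) (1 + q ^ (2j+1)))`. Each factor tends to `1/4` as `q → 1`, and
for `0 ≤ q ≤ 1` it is at most `a / (1 + a) ≤ 1/2` with `a = q ^ (2j+1)`. So the summands tend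
to `4⁻ⁿ` and are dominated by `2⁻ⁿ`, and dominated convergence gives `∑ 4⁻ⁿ = 4/3`.
-/

open Filter Finset Topology

noncomputable section

def rankFactor (q : ℝ) (j : ℕ) : ℝ :=
  q ^ (4 * j + 2) / ((1 + q ^ 3 * (q ^ 2) ^ j) * (1 + q * (q ^ 2) ^ j))

lemma sum_range_four_mul_add_two (n : ℕ) : ∑ j ∈ range n, (4 * j + 2) = 2 * n ^ 2 := by
  induction n with
  | zero => simp
  | succ k ih => rw [sum_range_succ, ih]; ring

lemma prod_rankFactor (q : ℝ) (n : ℕ) :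
    ∏ j ∈ range n, rankFactor q j = q ^ (2 * n ^ 2) /
      ((∏ j ∈ range n, (1 + q ^ 3 * (q ^ 2) ^ j)) *
        ∏ j ∈ range n, (1 + q * (q ^ 2) ^ j)) := by
  rw [← sum_range_four_mul_add_two, ← prod_pow_eq_pow_sum, ← prod_mul_distrib,
    ← prod_div_distrib]
  rfl

lemma rankFactor_nonneg {q : ℝ} (hq : 0 ≤ q) (j : ℕ) : 0 ≤ rankFactor q j := by
  unfold rankFactor; positivity

lemma sq_div_one_add_mul_one_add_le_half {a b : ℝ} (ha₀ : 0 ≤ a) (ha₁ : a ≤ 1)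
    (hb : 0 ≤ b) :
    a ^ 2 / ((1 + b * a) * (1 + a)) ≤ 1 / 2 := by
  rw [div_le_iff₀ (by positivity)]
  nlinarith [mul_nonneg hb ha₀, mul_nonneg (mul_nonneg hb ha₀) ha₀]

lemma rankFactor_le_half {q : ℝ} (hq₀ : 0 ≤ q) (hq₁ : q ≤ 1) (j : ℕ) :
    rankFactor q j ≤ 1 / 2 := by
  have h : rankFactor q j =
      (q ^ (2 * j + 1)) ^ 2 / ((1 + q ^ 2 * q ^ (2 * j + 1)) * (1 + q ^ (2 * j + 1))) := by
    unfold rankFactor; ring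
  exact h ▸ sq_div_one_add_mul_one_add_le_half (pow_nonneg hq₀ _) (pow_le_one₀ hq₀ hq₁)
    (sq_nonneg q)

lemma tendsto_rankFactor_one (j : ℕ) : Tendsto (rankFactor · j) (𝓝 1) (𝓝 (1 / 4)) := by
  have h : ContinuousAt (rankFactor · j) 1 := by
    unfold rankFactor
    exact ContinuousAt.div (by fun_prop) (by fun_prop) (by norm_num)
  convert h.tendsto using 2
  norm_num [rankFactor]

lemma tendsto_prod_rankFactor_one (n : ℕ) :
    Tendsto (fun q ↦ ∏ j ∈ range n, rankFactor q j) (𝓝 1) (𝓝 ((1 / 4) ^ n)) := by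
  simpa using tendsto_finsetProd (range n) fun j _ ↦ tendsto_rankFactor_one j

lemma norm_prod_rankFactor_le {q : ℝ} (hq₀ : 0 ≤ q) (hq₁ : q ≤ 1) (n : ℕ) :
    ‖∏ j ∈ range n, rankFactor q j‖ ≤ (1 / 2) ^ n := by
  rw [Real.norm_of_nonneg (prod_nonneg fun j _ ↦ rankFactor_nonneg hq₀ j)]
  simpa using prod_le_prod (s := range n) (fun j _ ↦ rankFactor_nonneg hq₀ j)
    fun j _ ↦ rankFactor_le_half hq₀ hq₁ j

end

theorem stmt16 :
    Filter.Tendsto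
      (fun q : ℝ => ∑' n : ℕ, q ^ (2 * n ^ 2) /
        ((∏ j ∈ Finset.range n, (1 + q ^ 3 * (q ^ 2) ^ j)) *
          ∏ j ∈ Finset.range n, (1 + q * (q ^ 2) ^ j)))
      (nhdsWithin 1 (Set.Ioo 0 1)) (nhds (4 / 3)) := by
  simp_rw [← prod_rankFactor]
  have hdom : ∀ᶠ q in 𝓝[Set.Ioo 0 1] (1 : ℝ), ∀ n,
      ‖∏ j ∈ range n, rankFactor q j‖ ≤ (1 / 2) ^ n := by
    filter_upwards [self_mem_nhdsWithin] with q hq n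
    exact norm_prod_rankFactor_le hq.1.le hq.2.le n
  have h := tendsto_tsum_of_dominated_convergence summable_geometric_two
    (fun n ↦ (tendsto_prod_rankFactor_one n).mono_left nhdsWithin_le_nhds) hdom
  rwa [tsum_geometric_of_lt_one (by norm_num) (by norm_num),
    show (1 - 1 / 4 : ℝ)⁻¹ = 4 / 3 by norm_num] at h
end
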